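/- For the twist knot J(2,4) (q = 2) and any root u₀ of φ_2(u) = 1 − 2u + u² − u³, the twisted Alexander polynomial of the corresponding parabolic representation equals (u₀²+4) − 4t + (u₀²+4)t². -/

import Mathlib

/-! λ₊ and λ₋ are the roots of `λ² - (u² + 2)λ + 1`, so with `s = λ₊ + λ₋ = u² + 2` we get
`αβ = (1 + λ₊)(1 + λ₋) = 2 + s` and `(λ₊ - λ₋)² = s² - 4 = (s - 2)(s + 2)`; hence
`δ = -(2 + s) + (s - 2) = -4` as soon as `s + 2 = u² + 4 ≠ 0`, which the relation `φ₂(u) = 0`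
guarantees. -/

open Polynomial

/-- `λ₊(u) = ((u²+2) + r)/2` where `r` is a square root of `u⁴+4u²`. -/
noncomputable def lamp (u r : ℂ) : ℂ := (u ^ 2 + 2 + r) / 2

/-- `λ₋(u) = ((u²+2) - r)/2` where `r` is a square root of `u⁴+4u²`. -/
noncomputable def lamm (u r : ℂ) : ℂ := (u ^ 2 + 2 - r) / 2

lemma lamp_mul_lamm {u r : ℂ} (hr : r ^ 2 = u ^ 4 + 4 * u ^ 2) : lamp u r * lamm u r = 1 := by
  unfold lamp lamm
  linear_combination (-1 / 4 : ℂ) * hr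

lemma two_add_lamp_add_lamm (u r : ℂ) : 2 + lamp u r + lamm u r = u ^ 2 + 4 := by
  unfold lamp lamm
  ring

lemma add_one_mul_add_one_of_mul_eq_one {R : Type*} [CommRing R] {x y : R} (hxy : x * y = 1) :
    (x + 1) * (y + 1) = 2 + x + y := by
  linear_combination hxy

lemma add_sub_two_mul_add_div_mul_sub_eq_neg_four {K : Type*} [Field K] {x y : K}
    (hxy : x * y = 1) (hs : 2 + x + y ≠ 0) :
    (x + 1) + (y + 1) - 2 * (x + 1) * (y + 1) + (x - y) / (2 + x + y) * ((x + 1) - (y + 1))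
      = -4 := by
  field_simp
  linear_combination (-(8 + 2 * x + 2 * y)) * hxy

lemma sq_add_four_ne_zero_of_phi_two_eq_zero {K : Type*} [Field K] [CharZero K] {u : K}
    (hroot : 1 - 2 * u + u ^ 2 - u ^ 3 = 0) : u ^ 2 + 4 ≠ 0 := by
  intro h
  have hu : 2 * u = 3 := by linear_combination hroot + (u - 1) * h
  have : (3 : K) ^ 2 + 16 = 0 := by linear_combination 4 * h - (2 * u + 3) * hu
  norm_num at this

/-- For J(2,4) and any root u₀ of φ_2(u) = 1 - 2u + u² - u³, the twisted Alexander
polynomial of the corresponding parabolic representation is (u₀²+4) - 4t + (u₀²+4)t². -/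
theorem stmt_17 (u r : ℂ) (hr : r ^ 2 = u ^ 4 + 4 * u ^ 2)
    (hroot : 1 - 2 * u + u ^ 2 - u ^ 3 = 0) :
    let α : ℂ := ∑ i ∈ Finset.range 2, (lamp u r) ^ i
    let β : ℂ := ∑ i ∈ Finset.range 2, (lamm u r) ^ i
    let γ : ℂ := α * β
    let δ : ℂ := α + β - 2 * α * β +
      ((lamp u r - lamm u r) / (2 + lamp u r + lamm u r)) * (α - β)
    (C γ + C δ * X + C γ * X ^ 2 : Polynomial ℂ) =
      C (u ^ 2 + 4) + C (-4 : ℂ) * X + C (u ^ 2 + 4) * X ^ 2 := by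
  intro α β γ δ
  have hprod := lamp_mul_lamm hr
  have hsum := two_add_lamp_add_lamm u r
  have hγ : γ = u ^ 2 + 4 := by
    simp only [γ, α, β, geom_sum_two, add_one_mul_add_one_of_mul_eq_one hprod, hsum]
  have hδ : δ = -4 := by
    simp only [δ, α, β, geom_sum_two]
    exact add_sub_two_mul_add_div_mul_sub_eq_neg_four hprod
      (hsum ▸ sq_add_four_ne_zero_of_phi_two_eq_zero hroot)
  rw [hγ, hδ]
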